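/- Let L₁₂[u] = (1/2)u₁u₂ − u₁³ − (1/2)u₁u₁₁₁ and L₁₃[u] = (1/2)u₁u₃ − (5/2)u₁⁴ + 5u₁u₁₁² − (1/2)u₁₁₁². If u(t₁,t₂,t₃) satisfies the evolutionary equations u₂ = 3u₁² + u₁₁₁ and u₃ = 10u₁³ + 5u₁₁² + 10u₁u₁₁₁ + u₁₁₁₁₁ (and their differential consequences), then D₂L₁₃ − D₃L₁₂ = D₁F₂₃, where F₂₃ = 3u₁⁵ + (135/2)u₁²u₁₁² + 25u₁³u₁₁₁ − (25/2)u₁₁²u₁₁₁ + 7u₁u₁₁₁² + 20u₁u₁₁u₁₁₁₁ + (13/2)u₁²u₁₁₁₁₁ + (1/2)u₁₁₁₁² − (1/2)u₁₁₁u₁₁₁₁₁ − (1/2)u₁₁u₁₁₁₁₁₁ + (1/2)u₁u₁₁₁₁₁₁₁. -/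

import Mathlib

noncomputable section

/-- Partial derivative with respect to `t₁`. -/
def D1 (u : ℝ → ℝ → ℝ → ℝ) : ℝ → ℝ → ℝ → ℝ := fun x y z => deriv (fun s => u s y z) x

/-- Partial derivative with respect to `t₂`. -/
def D2 (u : ℝ → ℝ → ℝ → ℝ) : ℝ → ℝ → ℝ → ℝ := fun x y z => deriv (fun s => u x s z) y

/-- Partial derivative with respect to `t₃`. -/
def D3 (u : ℝ → ℝ → ℝ → ℝ) : ℝ → ℝ → ℝ → ℝ := fun x y z => deriv (fun s => u x y s) z

/-- The potential KdV Lagrangian `L₁₂ = ½u₁u₂ − u₁³ − ½u₁u₁₁₁` evaluated on `u`. -/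
def L12 (u : ℝ → ℝ → ℝ → ℝ) : ℝ → ℝ → ℝ → ℝ := fun x y z =>
  (1/2) * D1 u x y z * D2 u x y z - (D1 u x y z)^3 - (1/2) * D1 u x y z * D1^[3] u x y z

/-- The Lagrangian `L₁₃ = ½u₁u₃ − (5/2)u₁⁴ + 5u₁u₁₁² − ½u₁₁₁²` evaluated on `u`. -/
def L13 (u : ℝ → ℝ → ℝ → ℝ) : ℝ → ℝ → ℝ → ℝ := fun x y z =>
  (1/2) * D1 u x y z * D3 u x y z - (5/2) * (D1 u x y z)^4
    + 5 * D1 u x y z * (D1 (D1 u) x y z)^2 - (1/2) * (D1^[3] u x y z)^2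

/-- `F₂₃` for the potential KdV hierarchy. -/
def F23 (u : ℝ → ℝ → ℝ → ℝ) : ℝ → ℝ → ℝ → ℝ := fun x y z =>
  3 * (D1 u x y z)^5 + (135/2) * (D1 u x y z)^2 * (D1 (D1 u) x y z)^2
  + 25 * (D1 u x y z)^3 * D1^[3] u x y z
  - (25/2) * (D1 (D1 u) x y z)^2 * D1^[3] u x y z
  + 7 * D1 u x y z * (D1^[3] u x y z)^2
  + 20 * D1 u x y z * D1 (D1 u) x y z * D1^[4] u x y z
  + (13/2) * (D1 u x y z)^2 * D1^[5] u x y z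
  + (1/2) * (D1^[4] u x y z)^2
  - (1/2) * D1^[3] u x y z * D1^[5] u x y z
  - (1/2) * D1 (D1 u) x y z * D1^[6] u x y z
  + (1/2) * D1 u x y z * D1^[7] u x y z

abbrev unc (F : ℝ → ℝ → ℝ → ℝ) : ℝ × ℝ × ℝ → ℝ := fun p => F p.1 p.2.1 p.2.2

abbrev Sm (F : ℝ → ℝ → ℝ → ℝ) : Prop := ContDiff ℝ (⊤ : ℕ∞) (unc F)

lemma hasDerivAt_slice1 {F : ℝ → ℝ → ℝ → ℝ} (hF : Sm F) (x y z : ℝ) :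
    HasDerivAt (fun s => F s y z) (fderiv ℝ (unc F) (x, y, z) (1, 0, 0)) x := by
  have hL : HasDerivAt (fun s : ℝ => ((s, y, z) : ℝ × ℝ × ℝ)) (1, 0, 0) x :=
    (hasDerivAt_id x).prodMk ((hasDerivAt_const x y).prodMk (hasDerivAt_const x z))
  exact (((hF.differentiable (by simp)) (x, y, z)).hasFDerivAt).comp_hasDerivAt x hL

lemma hasDerivAt_slice2 {F : ℝ → ℝ → ℝ → ℝ} (hF : Sm F) (x y z : ℝ) :
    HasDerivAt (fun s => F x s z) (fderiv ℝ (unc F) (x, y, z) (0, 1, 0)) y := by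
  have hL : HasDerivAt (fun s : ℝ => ((x, s, z) : ℝ × ℝ × ℝ)) (0, 1, 0) y :=
    (hasDerivAt_const y x).prodMk ((hasDerivAt_id y).prodMk (hasDerivAt_const y z))
  exact (((hF.differentiable (by simp)) (x, y, z)).hasFDerivAt).comp_hasDerivAt y hL

lemma hasDerivAt_slice3 {F : ℝ → ℝ → ℝ → ℝ} (hF : Sm F) (x y z : ℝ) :
    HasDerivAt (fun s => F x y s) (fderiv ℝ (unc F) (x, y, z) (0, 0, 1)) z := by
  have hL : HasDerivAt (fun s : ℝ => ((x, y, s) : ℝ × ℝ × ℝ)) (0, 0, 1) z :=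
    (hasDerivAt_const z x).prodMk ((hasDerivAt_const z y).prodMk (hasDerivAt_id z))
  exact (((hF.differentiable (by simp)) (x, y, z)).hasFDerivAt).comp_hasDerivAt z hL

lemma sm_D1 {F : ℝ → ℝ → ℝ → ℝ} (hF : Sm F) : Sm (D1 F) := by
  have h : unc (D1 F) = fun p => fderiv ℝ (unc F) p (1, 0, 0) := by
    funext p
    exact (hasDerivAt_slice1 hF p.1 p.2.1 p.2.2).deriv
  rw [Sm, h]
  exact (hF.fderiv_right (by simp)).clm_apply contDiff_const

lemma D2_D1_comm {F : ℝ → ℝ → ℝ → ℝ} (hF : Sm F) (x y z : ℝ) :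
    D2 (D1 F) x y z = D1 (D2 F) x y z := by
  have hGd : ∀ p, HasFDerivAt (unc F) (fderiv ℝ (unc F) p) p := fun p =>
    (hF.differentiable (by simp) p).hasFDerivAt
  have hGd2 : HasFDerivAt (fderiv ℝ (unc F)) (fderiv ℝ (fderiv ℝ (unc F)) (x, y, z)) (x, y, z) :=
    (((hF.fderiv_right (m := 1) (WithTop.coe_le_coe.mpr le_top)).differentiable one_ne_zero) (x, y, z)).hasFDerivAt
  have hA : D2 (D1 F) x y z = fderiv ℝ (fderiv ℝ (unc F)) (x, y, z) (0, 1, 0) (1, 0, 0) := by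
    have hL : HasDerivAt (fun s : ℝ => ((x, s, z) : ℝ × ℝ × ℝ)) (0, 1, 0) y :=
      (hasDerivAt_const y x).prodMk ((hasDerivAt_id y).prodMk (hasDerivAt_const y z))
    have h1 : HasDerivAt (fun s => fderiv ℝ (unc F) (x, s, z))
        (fderiv ℝ (fderiv ℝ (unc F)) (x, y, z) (0, 1, 0)) y := hGd2.comp_hasDerivAt y hL
    have h2 : HasDerivAt (fun s => fderiv ℝ (unc F) (x, s, z) (1, 0, 0))
        (fderiv ℝ (fderiv ℝ (unc F)) (x, y, z) (0, 1, 0) (1, 0, 0)) y := by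
      have := h1.clm_apply (hasDerivAt_const y ((1 : ℝ), (0 : ℝ), (0 : ℝ)))
      simpa using this
    have hfun : (fun s => D1 F x s z) = fun s => fderiv ℝ (unc F) (x, s, z) (1, 0, 0) := by
      funext s
      exact (hasDerivAt_slice1 hF x s z).deriv
    show deriv (fun s => D1 F x s z) y = _
    rw [hfun]
    exact h2.deriv
  have hB : D1 (D2 F) x y z = fderiv ℝ (fderiv ℝ (unc F)) (x, y, z) (1, 0, 0) (0, 1, 0) := by
    have hL : HasDerivAt (fun s : ℝ => ((s, y, z) : ℝ × ℝ × ℝ)) (1, 0, 0) x :=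
      (hasDerivAt_id x).prodMk ((hasDerivAt_const x y).prodMk (hasDerivAt_const x z))
    have h1 : HasDerivAt (fun s => fderiv ℝ (unc F) (s, y, z))
        (fderiv ℝ (fderiv ℝ (unc F)) (x, y, z) (1, 0, 0)) x := hGd2.comp_hasDerivAt x hL
    have h2 : HasDerivAt (fun s => fderiv ℝ (unc F) (s, y, z) (0, 1, 0))
        (fderiv ℝ (fderiv ℝ (unc F)) (x, y, z) (1, 0, 0) (0, 1, 0)) x := by
      have := h1.clm_apply (hasDerivAt_const x ((0 : ℝ), (1 : ℝ), (0 : ℝ)))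
      simpa using this
    have hfun : (fun s => D2 F s y z) = fun s => fderiv ℝ (unc F) (s, y, z) (0, 1, 0) := by
      funext s
      exact (hasDerivAt_slice2 hF s y z).deriv
    show deriv (fun s => D2 F s y z) x = _
    rw [hfun]
    exact h2.deriv
  rw [hA, hB]
  exact second_derivative_symmetric hGd hGd2 _ _

lemma D3_D1_comm {F : ℝ → ℝ → ℝ → ℝ} (hF : Sm F) (x y z : ℝ) :
    D3 (D1 F) x y z = D1 (D3 F) x y z := by
  have hGd : ∀ p, HasFDerivAt (unc F) (fderiv ℝ (unc F) p) p := fun p =>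
    (hF.differentiable (by simp) p).hasFDerivAt
  have hGd2 : HasFDerivAt (fderiv ℝ (unc F)) (fderiv ℝ (fderiv ℝ (unc F)) (x, y, z)) (x, y, z) :=
    (((hF.fderiv_right (m := 1) (WithTop.coe_le_coe.mpr le_top)).differentiable one_ne_zero) (x, y, z)).hasFDerivAt
  have hA : D3 (D1 F) x y z = fderiv ℝ (fderiv ℝ (unc F)) (x, y, z) (0, 0, 1) (1, 0, 0) := by
    have hL : HasDerivAt (fun s : ℝ => ((x, y, s) : ℝ × ℝ × ℝ)) (0, 0, 1) z :=
      (hasDerivAt_const z x).prodMk ((hasDerivAt_const z y).prodMk (hasDerivAt_id z))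
    have h1 : HasDerivAt (fun s => fderiv ℝ (unc F) (x, y, s))
        (fderiv ℝ (fderiv ℝ (unc F)) (x, y, z) (0, 0, 1)) z := hGd2.comp_hasDerivAt z hL
    have h2 : HasDerivAt (fun s => fderiv ℝ (unc F) (x, y, s) (1, 0, 0))
        (fderiv ℝ (fderiv ℝ (unc F)) (x, y, z) (0, 0, 1) (1, 0, 0)) z := by
      have := h1.clm_apply (hasDerivAt_const z ((1 : ℝ), (0 : ℝ), (0 : ℝ)))
      simpa using this
    have hfun : (fun s => D1 F x y s) = fun s => fderiv ℝ (unc F) (x, y, s) (1, 0, 0) := by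
      funext s
      exact (hasDerivAt_slice1 hF x y s).deriv
    show deriv (fun s => D1 F x y s) z = _
    rw [hfun]
    exact h2.deriv
  have hB : D1 (D3 F) x y z = fderiv ℝ (fderiv ℝ (unc F)) (x, y, z) (1, 0, 0) (0, 0, 1) := by
    have hL : HasDerivAt (fun s : ℝ => ((s, y, z) : ℝ × ℝ × ℝ)) (1, 0, 0) x :=
      (hasDerivAt_id x).prodMk ((hasDerivAt_const x y).prodMk (hasDerivAt_const x z))
    have h1 : HasDerivAt (fun s => fderiv ℝ (unc F) (s, y, z))
        (fderiv ℝ (fderiv ℝ (unc F)) (x, y, z) (1, 0, 0)) x := hGd2.comp_hasDerivAt x hL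
    have h2 : HasDerivAt (fun s => fderiv ℝ (unc F) (s, y, z) (0, 0, 1))
        (fderiv ℝ (fderiv ℝ (unc F)) (x, y, z) (1, 0, 0) (0, 0, 1)) x := by
      have := h1.clm_apply (hasDerivAt_const x ((0 : ℝ), (0 : ℝ), (1 : ℝ)))
      simpa using this
    have hfun : (fun s => D3 F s y z) = fun s => fderiv ℝ (unc F) (s, y, z) (0, 0, 1) := by
      funext s
      exact (hasDerivAt_slice3 hF s y z).deriv
    show deriv (fun s => D3 F s y z) x = _
    rw [hfun]
    exact h2.deriv
  rw [hA, hB]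
  exact second_derivative_symmetric hGd hGd2 _ _

lemma diffSlice1 {F : ℝ → ℝ → ℝ → ℝ} (hF : Sm F) (y z : ℝ) :
    Differentiable ℝ (fun s => F s y z) :=
  (hF.differentiable (by simp)).comp
    (differentiable_id.prodMk ((differentiable_const y).prodMk (differentiable_const z)))

lemma diffSlice2 {F : ℝ → ℝ → ℝ → ℝ} (hF : Sm F) (x z : ℝ) :
    Differentiable ℝ (fun s => F x s z) :=
  (hF.differentiable (by simp)).comp
    ((differentiable_const x).prodMk (differentiable_id.prodMk (differentiable_const z)))

lemma diffSlice3 {F : ℝ → ℝ → ℝ → ℝ} (hF : Sm F) (x y : ℝ) :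
    Differentiable ℝ (fun s => F x y s) :=
  (hF.differentiable (by simp)).comp
    ((differentiable_const x).prodMk ((differentiable_const y).prodMk differentiable_id))


/-- If `u(t₁,t₂,t₃)` satisfies `u₂ = 3u₁² + u₁₁₁` and
`u₃ = 10u₁³ + 5u₁₁² + 10u₁u₁₁₁ + u₁₁₁₁₁`, then `D₂L₁₃ − D₃L₁₂ = D₁F₂₃`. -/
theorem stmt7 (u : ℝ → ℝ → ℝ → ℝ)
    (hu : ContDiff ℝ (⊤ : ℕ∞) (fun p : ℝ × ℝ × ℝ => u p.1 p.2.1 p.2.2))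
    (h2 : ∀ x y z : ℝ, D2 u x y z = 3 * (D1 u x y z)^2 + D1^[3] u x y z)
    (h3 : ∀ x y z : ℝ, D3 u x y z
      = 10 * (D1 u x y z)^3 + 5 * (D1 (D1 u) x y z)^2
        + 10 * D1 u x y z * D1^[3] u x y z + D1^[5] u x y z) :
    ∀ x y z : ℝ,
      D2 (L13 u) x y z - D3 (L12 u) x y z = D1 (F23 u) x y z := by
  have hsm : ∀ k : ℕ, Sm (D1^[k] u) := by
    intro k
    induction k with
    | zero => exact hu
    | succ n ih => rw [Function.iterate_succ_apply']; exact sm_D1 ih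
  have hs1 : ∀ (k : ℕ) (x y z : ℝ),
      HasDerivAt (fun s => D1^[k] u s y z) (D1^[k + 1] u x y z) x := by
    intro k x y z
    rw [Function.iterate_succ_apply']
    exact ((diffSlice1 (hsm k) y z) x).hasDerivAt
  have hs2 : ∀ (k : ℕ) (x y z : ℝ),
      HasDerivAt (fun s => D1^[k] u x s z) (D2 (D1^[k] u) x y z) y := by
    intro k x y z
    exact ((diffSlice2 (hsm k) x z) y).hasDerivAt
  have hs3 : ∀ (k : ℕ) (x y z : ℝ),
      HasDerivAt (fun s => D1^[k] u x y s) (D3 (D1^[k] u) x y z) z := by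
    intro k x y z
    exact ((diffSlice3 (hsm k) x y) z).hasDerivAt
  -- t₂-derivatives of the x-derivatives, on solutions
  have q1 : ∀ x y z : ℝ, D2 (D1^[1] u) x y z
      = 6 * D1^[1] u x y z * D1^[2] u x y z + D1^[4] u x y z := by
    intro x y z
    have e : D2 (D1^[1] u) x y z = D1 (D2 u) x y z := D2_D1_comm hu x y z
    rw [e]
    have hfun : (fun s => D2 u s y z)
        = fun s => 3 * D1^[1] u s y z ^ 2 + D1^[3] u s y z := by
      funext s; rw [h2 s y z]; exact rfl
    have hd : HasDerivAt (fun s => 3 * D1^[1] u s y z ^ 2 + D1^[3] u s y z)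
        (3 * (((2:ℕ):ℝ) * D1^[1] u x y z ^ 1 * D1^[2] u x y z) + D1^[4] u x y z) x :=
      (((hs1 1 x y z).pow 2).const_mul 3).add (hs1 3 x y z)
    show deriv (fun s => D2 u s y z) x = _
    rw [hfun, hd.deriv]; push_cast; ring
  have q2 : ∀ x y z : ℝ, D2 (D1^[2] u) x y z
      = 6 * D1^[2] u x y z ^ 2 + 6 * D1^[1] u x y z * D1^[3] u x y z + D1^[5] u x y z := by
    intro x y z
    have e : D2 (D1^[2] u) x y z = D1 (D2 (D1^[1] u)) x y z := D2_D1_comm (hsm 1) x y z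
    rw [e]
    have hfun : (fun s => D2 (D1^[1] u) s y z)
        = fun s => 6 * D1^[1] u s y z * D1^[2] u s y z + D1^[4] u s y z := by
      funext s; exact q1 s y z
    have hd : HasDerivAt (fun s => 6 * D1^[1] u s y z * D1^[2] u s y z + D1^[4] u s y z)
        ((6 * D1^[2] u x y z) * D1^[2] u x y z + (6 * D1^[1] u x y z) * D1^[3] u x y z
          + D1^[5] u x y z) x :=
      (((hs1 1 x y z).const_mul 6).mul (hs1 2 x y z)).add (hs1 4 x y z)
    show deriv (fun s => D2 (D1^[1] u) s y z) x = _
    rw [hfun, hd.deriv]; ring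
  have q3 : ∀ x y z : ℝ, D2 (D1^[3] u) x y z
      = 18 * D1^[2] u x y z * D1^[3] u x y z + 6 * D1^[1] u x y z * D1^[4] u x y z
        + D1^[6] u x y z := by
    intro x y z
    have e : D2 (D1^[3] u) x y z = D1 (D2 (D1^[2] u)) x y z := D2_D1_comm (hsm 2) x y z
    rw [e]
    have hfun : (fun s => D2 (D1^[2] u) s y z)
        = fun s => 6 * D1^[2] u s y z ^ 2 + 6 * D1^[1] u s y z * D1^[3] u s y z
          + D1^[5] u s y z := by
      funext s; exact q2 s y z
    have hd : HasDerivAt (fun s => 6 * D1^[2] u s y z ^ 2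
          + 6 * D1^[1] u s y z * D1^[3] u s y z + D1^[5] u s y z)
        (6 * (((2:ℕ):ℝ) * D1^[2] u x y z ^ 1 * D1^[3] u x y z)
          + ((6 * D1^[2] u x y z) * D1^[3] u x y z + (6 * D1^[1] u x y z) * D1^[4] u x y z)
          + D1^[6] u x y z) x :=
      ((((hs1 2 x y z).pow 2).const_mul 6).add
        (((hs1 1 x y z).const_mul 6).mul (hs1 3 x y z))).add (hs1 5 x y z)
    show deriv (fun s => D2 (D1^[2] u) s y z) x = _
    rw [hfun, hd.deriv]; push_cast; ring
  have q4 : ∀ x y z : ℝ, D2 (D1^[4] u) x y z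
      = 18 * D1^[3] u x y z ^ 2 + 24 * D1^[2] u x y z * D1^[4] u x y z
        + 6 * D1^[1] u x y z * D1^[5] u x y z + D1^[7] u x y z := by
    intro x y z
    have e : D2 (D1^[4] u) x y z = D1 (D2 (D1^[3] u)) x y z := D2_D1_comm (hsm 3) x y z
    rw [e]
    have hfun : (fun s => D2 (D1^[3] u) s y z)
        = fun s => 18 * D1^[2] u s y z * D1^[3] u s y z
          + 6 * D1^[1] u s y z * D1^[4] u s y z + D1^[6] u s y z := by
      funext s; exact q3 s y z
    have hd : HasDerivAt (fun s => 18 * D1^[2] u s y z * D1^[3] u s y z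
          + 6 * D1^[1] u s y z * D1^[4] u s y z + D1^[6] u s y z)
        (((18 * D1^[3] u x y z) * D1^[3] u x y z + (18 * D1^[2] u x y z) * D1^[4] u x y z)
          + ((6 * D1^[2] u x y z) * D1^[4] u x y z + (6 * D1^[1] u x y z) * D1^[5] u x y z)
          + D1^[7] u x y z) x :=
      ((((hs1 2 x y z).const_mul 18).mul (hs1 3 x y z)).add
        (((hs1 1 x y z).const_mul 6).mul (hs1 4 x y z))).add (hs1 6 x y z)
    show deriv (fun s => D2 (D1^[3] u) s y z) x = _
    rw [hfun, hd.deriv]; ring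
  have q5 : ∀ x y z : ℝ, D2 (D1^[5] u) x y z
      = 60 * D1^[3] u x y z * D1^[4] u x y z + 30 * D1^[2] u x y z * D1^[5] u x y z
        + 6 * D1^[1] u x y z * D1^[6] u x y z + D1^[8] u x y z := by
    intro x y z
    have e : D2 (D1^[5] u) x y z = D1 (D2 (D1^[4] u)) x y z := D2_D1_comm (hsm 4) x y z
    rw [e]
    have hfun : (fun s => D2 (D1^[4] u) s y z)
        = fun s => 18 * D1^[3] u s y z ^ 2 + 24 * D1^[2] u s y z * D1^[4] u s y z
          + 6 * D1^[1] u s y z * D1^[5] u s y z + D1^[7] u s y z := by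
      funext s; exact q4 s y z
    have hd : HasDerivAt (fun s => 18 * D1^[3] u s y z ^ 2
          + 24 * D1^[2] u s y z * D1^[4] u s y z
          + 6 * D1^[1] u s y z * D1^[5] u s y z + D1^[7] u s y z)
        (18 * (((2:ℕ):ℝ) * D1^[3] u x y z ^ 1 * D1^[4] u x y z)
          + ((24 * D1^[3] u x y z) * D1^[4] u x y z + (24 * D1^[2] u x y z) * D1^[5] u x y z)
          + ((6 * D1^[2] u x y z) * D1^[5] u x y z + (6 * D1^[1] u x y z) * D1^[6] u x y z)
          + D1^[8] u x y z) x :=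
      (((((hs1 3 x y z).pow 2).const_mul 18).add
        (((hs1 2 x y z).const_mul 24).mul (hs1 4 x y z))).add
        (((hs1 1 x y z).const_mul 6).mul (hs1 5 x y z))).add (hs1 7 x y z)
    show deriv (fun s => D2 (D1^[4] u) s y z) x = _
    rw [hfun, hd.deriv]; push_cast; ring
  -- t₃-derivative of u₁ on solutions
  have r1 : ∀ x y z : ℝ, D3 (D1^[1] u) x y z
      = 30 * D1^[1] u x y z ^ 2 * D1^[2] u x y z + 20 * D1^[2] u x y z * D1^[3] u x y z
        + 10 * D1^[1] u x y z * D1^[4] u x y z + D1^[6] u x y z := by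
    intro x y z
    have e : D3 (D1^[1] u) x y z = D1 (D3 u) x y z := D3_D1_comm hu x y z
    rw [e]
    have hfun : (fun s => D3 u s y z)
        = fun s => 10 * D1^[1] u s y z ^ 3 + 5 * D1^[2] u s y z ^ 2
          + 10 * D1^[1] u s y z * D1^[3] u s y z + D1^[5] u s y z := by
      funext s; rw [h3 s y z]; exact rfl
    have hd : HasDerivAt (fun s => 10 * D1^[1] u s y z ^ 3 + 5 * D1^[2] u s y z ^ 2
          + 10 * D1^[1] u s y z * D1^[3] u s y z + D1^[5] u s y z)
        (10 * (((3:ℕ):ℝ) * D1^[1] u x y z ^ 2 * D1^[2] u x y z)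
          + 5 * (((2:ℕ):ℝ) * D1^[2] u x y z ^ 1 * D1^[3] u x y z)
          + ((10 * D1^[2] u x y z) * D1^[3] u x y z + (10 * D1^[1] u x y z) * D1^[4] u x y z)
          + D1^[6] u x y z) x :=
      (((((hs1 1 x y z).pow 3).const_mul 10).add
        (((hs1 2 x y z).pow 2).const_mul 5)).add
        (((hs1 1 x y z).const_mul 10).mul (hs1 3 x y z))).add (hs1 5 x y z)
    show deriv (fun s => D3 u s y z) x = _
    rw [hfun, hd.deriv]; push_cast; ring
  intro x y z
  have hL13 : D2 (L13 u) x y z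
      = (60) * D1^[1] u x y z ^ 4 * D1^[2] u x y z
      + (40) * D1^[1] u x y z ^ 3 * D1^[4] u x y z
      + (240) * D1^[1] u x y z ^ 2 * D1^[2] u x y z * D1^[3] u x y z
      + (8) * D1^[1] u x y z ^ 2 * D1^[6] u x y z
      + (135) * D1^[1] u x y z * D1^[2] u x y z ^ 3
      + (33) * D1^[1] u x y z * D1^[2] u x y z * D1^[5] u x y z
      + (34) * D1^[1] u x y z * D1^[3] u x y z * D1^[4] u x y z
      + (1/2) * D1^[1] u x y z * D1^[8] u x y z
      + (15/2) * D1^[2] u x y z ^ 2 * D1^[4] u x y z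
      + (-18) * D1^[2] u x y z * D1^[3] u x y z ^ 2
      + (-1) * D1^[3] u x y z * D1^[6] u x y z
      + (1/2) * D1^[4] u x y z * D1^[5] u x y z := by
    have hfun : (fun s => L13 u x s z)
        = fun s => (5/2) * D1^[1] u x s z ^ 4
          + (15/2) * D1^[1] u x s z * D1^[2] u x s z ^ 2
          + 5 * D1^[1] u x s z ^ 2 * D1^[3] u x s z
          + (1/2) * D1^[1] u x s z * D1^[5] u x s z
          - (1/2) * D1^[3] u x s z ^ 2 := by
      funext s
      simp only [L13]
      rw [h3 x s z, show D1 (D1 u) = D1^[2] u from rfl, show D1 u = D1^[1] u from rfl]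
      ring
    have hd : HasDerivAt (fun s => (5/2) * D1^[1] u x s z ^ 4
          + (15/2) * D1^[1] u x s z * D1^[2] u x s z ^ 2
          + 5 * D1^[1] u x s z ^ 2 * D1^[3] u x s z
          + (1/2) * D1^[1] u x s z * D1^[5] u x s z
          - (1/2) * D1^[3] u x s z ^ 2)
        ((5/2) * (((4:ℕ):ℝ) * D1^[1] u x y z ^ 3 * D2 (D1^[1] u) x y z)
          + (((15/2) * D2 (D1^[1] u) x y z) * D1^[2] u x y z ^ 2
            + ((15/2) * D1^[1] u x y z)
              * (((2:ℕ):ℝ) * D1^[2] u x y z ^ 1 * D2 (D1^[2] u) x y z))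
          + ((5 * (((2:ℕ):ℝ) * D1^[1] u x y z ^ 1 * D2 (D1^[1] u) x y z)) * D1^[3] u x y z
            + (5 * D1^[1] u x y z ^ 2) * D2 (D1^[3] u) x y z)
          + (((1/2) * D2 (D1^[1] u) x y z) * D1^[5] u x y z
            + ((1/2) * D1^[1] u x y z) * D2 (D1^[5] u) x y z)
          - (1/2) * (((2:ℕ):ℝ) * D1^[3] u x y z ^ 1 * D2 (D1^[3] u) x y z)) y :=
      (((((hs2 1 x y z).pow 4).const_mul (5/2)).add
        (((hs2 1 x y z).const_mul (15/2)).mul ((hs2 2 x y z).pow 2))).add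
        ((((hs2 1 x y z).pow 2).const_mul 5).mul (hs2 3 x y z))).add
        (((hs2 1 x y z).const_mul (1/2)).mul (hs2 5 x y z)) |>.sub
        (((hs2 3 x y z).pow 2).const_mul (1/2))
    show deriv (fun s => L13 u x s z) y = _
    rw [hfun, hd.deriv, q1 x y z, q2 x y z, q3 x y z, q5 x y z]
    push_cast; ring
  have hL12 : D3 (L12 u) x y z
      = (45) * D1^[1] u x y z ^ 4 * D1^[2] u x y z
      + (15) * D1^[1] u x y z ^ 3 * D1^[4] u x y z
      + (30) * D1^[1] u x y z ^ 2 * D1^[2] u x y z * D1^[3] u x y z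
      + (3/2) * D1^[1] u x y z ^ 2 * D1^[6] u x y z := by
    have hfun : (fun s => L12 u x y s) = fun s => (1/2) * D1^[1] u x y s ^ 3 := by
      funext s
      simp only [L12]
      rw [h2 x y s, show D1 u = D1^[1] u from rfl]
      ring
    have hd : HasDerivAt (fun s => (1/2) * D1^[1] u x y s ^ 3)
        ((1/2) * (((3:ℕ):ℝ) * D1^[1] u x y z ^ 2 * D3 (D1^[1] u) x y z)) z :=
      ((hs3 1 x y z).pow 3).const_mul (1/2)
    show deriv (fun s => L12 u x y s) z = _
    rw [hfun, hd.deriv, r1 x y z]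
    push_cast; ring
  have hF : D1 (F23 u) x y z
      = (15) * D1^[1] u x y z ^ 4 * D1^[2] u x y z
      + (25) * D1^[1] u x y z ^ 3 * D1^[4] u x y z
      + (210) * D1^[1] u x y z ^ 2 * D1^[2] u x y z * D1^[3] u x y z
      + (13/2) * D1^[1] u x y z ^ 2 * D1^[6] u x y z
      + (135) * D1^[1] u x y z * D1^[2] u x y z ^ 3
      + (33) * D1^[1] u x y z * D1^[2] u x y z * D1^[5] u x y z
      + (34) * D1^[1] u x y z * D1^[3] u x y z * D1^[4] u x y z
      + (1/2) * D1^[1] u x y z * D1^[8] u x y z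
      + (15/2) * D1^[2] u x y z ^ 2 * D1^[4] u x y z
      + (-18) * D1^[2] u x y z * D1^[3] u x y z ^ 2
      + (-1) * D1^[3] u x y z * D1^[6] u x y z
      + (1/2) * D1^[4] u x y z * D1^[5] u x y z := by
    have hd : HasDerivAt (fun s => F23 u s y z)
        (3 * (((5:ℕ):ℝ) * D1^[1] u x y z ^ 4 * D1^[2] u x y z)
          + (((135/2) * (((2:ℕ):ℝ) * D1^[1] u x y z ^ 1 * D1^[2] u x y z))
              * D1^[2] u x y z ^ 2
            + ((135/2) * D1^[1] u x y z ^ 2)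
              * (((2:ℕ):ℝ) * D1^[2] u x y z ^ 1 * D1^[3] u x y z))
          + ((25 * (((3:ℕ):ℝ) * D1^[1] u x y z ^ 2 * D1^[2] u x y z)) * D1^[3] u x y z
            + (25 * D1^[1] u x y z ^ 3) * D1^[4] u x y z)
          - (((25/2) * (((2:ℕ):ℝ) * D1^[2] u x y z ^ 1 * D1^[3] u x y z)) * D1^[3] u x y z
            + ((25/2) * D1^[2] u x y z ^ 2) * D1^[4] u x y z)
          + ((7 * D1^[2] u x y z) * D1^[3] u x y z ^ 2
            + (7 * D1^[1] u x y z)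
              * (((2:ℕ):ℝ) * D1^[3] u x y z ^ 1 * D1^[4] u x y z))
          + (((20 * D1^[2] u x y z) * D1^[2] u x y z
              + (20 * D1^[1] u x y z) * D1^[3] u x y z) * D1^[4] u x y z
            + (20 * D1^[1] u x y z * D1^[2] u x y z) * D1^[5] u x y z)
          + (((13/2) * (((2:ℕ):ℝ) * D1^[1] u x y z ^ 1 * D1^[2] u x y z)) * D1^[5] u x y z
            + ((13/2) * D1^[1] u x y z ^ 2) * D1^[6] u x y z)
          + (1/2) * (((2:ℕ):ℝ) * D1^[4] u x y z ^ 1 * D1^[5] u x y z)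
          - (((1/2) * D1^[4] u x y z) * D1^[5] u x y z
            + ((1/2) * D1^[3] u x y z) * D1^[6] u x y z)
          - (((1/2) * D1^[3] u x y z) * D1^[6] u x y z
            + ((1/2) * D1^[2] u x y z) * D1^[7] u x y z)
          + (((1/2) * D1^[2] u x y z) * D1^[7] u x y z
            + ((1/2) * D1^[1] u x y z) * D1^[8] u x y z)) x :=
      ((((((((((((hs1 1 x y z).pow 5).const_mul 3).add
        ((((hs1 1 x y z).pow 2).const_mul (135/2)).mul ((hs1 2 x y z).pow 2))).add
        ((((hs1 1 x y z).pow 3).const_mul 25).mul (hs1 3 x y z))).sub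
        ((((hs1 2 x y z).pow 2).const_mul (25/2)).mul (hs1 3 x y z))).add
        (((hs1 1 x y z).const_mul 7).mul ((hs1 3 x y z).pow 2))).add
        ((((hs1 1 x y z).const_mul 20).mul (hs1 2 x y z)).mul (hs1 4 x y z))).add
        ((((hs1 1 x y z).pow 2).const_mul (13/2)).mul (hs1 5 x y z))).add
        (((hs1 4 x y z).pow 2).const_mul (1/2))).sub
        (((hs1 3 x y z).const_mul (1/2)).mul (hs1 5 x y z))).sub
        (((hs1 2 x y z).const_mul (1/2)).mul (hs1 6 x y z))).add
        (((hs1 1 x y z).const_mul (1/2)).mul (hs1 7 x y z))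
    show deriv (fun s => F23 u s y z) x = _
    rw [hd.deriv]
    push_cast; ring
  rw [hL13, hL12, hF]
  ring
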